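/- arXiv:2304.02770 — 2 statements merged into one kernel-verified Lean document; each statement's English description precedes it below -/
import Mathlib

section
/- Let f: {±1}^n → ℝ with ∑_S f̂(S)² ≤ 1 (e.g. Boolean f), suppose the level-wise L1 bound ∑_{|S|=i}|f̂(S)| ≤ M^i holds for all i < w with M ≥ 2, and suppose the tail bound ∑_{|S|≥w} f̂(S)² ≤ ε/2. Then there exists a set 𝓕 of at most 2·M^{2w}/ε subsets S ⊆ [n] such that ∑_{S∈𝓕} f̂(S)² ≥ 1 − ε. -/
/-!
Keep the coefficients of degree below `w` whose absolute value is at least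
`τ = ε / (2 M^w)`. By the level-wise `L¹` bounds and `M ≥ 2`, the coefficients of degree below
`w` have total absolute value at most `∑_{i<w} M^i ≤ M^w`. Hence at most `M^w / τ = 2 M^{2w} / ε`
coefficients are kept, and the discarded low-degree ones carry mass at most
`τ · M^w = ε / 2`, since `f̂(S)² ≤ τ |f̂(S)|` for each of them. Together with the tail bound,
at most `ε` of the total mass `1` is lost.
-/

/-- Fourier coefficient of `f : {±1}^n → ℝ` (inputs encoded as `Fin n → Bool`,
with `true ↦ -1`, `false ↦ 1`). -/
noncomputable def coef {n : ℕ} (f : (Fin n → Bool) → ℝ) (S : Finset (Fin n)) : ℝ :=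
  (∑ x : Fin n → Bool, f x * ∏ i ∈ S, (if x i then (-1 : ℝ) else 1)) / 2 ^ n

open Finset

theorem geom_sum_le_pow_of_two_le {M : ℝ} (hM : 2 ≤ M) (w : ℕ) :
    ∑ i ∈ range w, M ^ i ≤ M ^ w := by
  induction w with
  | zero => simp
  | succ w ih =>
    rw [sum_range_succ, pow_succ]
    nlinarith [pow_nonneg (zero_le_two.trans hM) w]

theorem sum_filter_lt_le_sum_range {ι : Type*} [Fintype ι] (deg : ι → ℕ) (g : ι → ℝ)
    (B : ℕ → ℝ) {w : ℕ} (h : ∀ i < w, ∑ x ∈ univ.filter (deg · = i), g x ≤ B i) :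
    ∑ x ∈ univ.filter (deg · < w), g x ≤ ∑ i ∈ range w, B i := by
  rw [← sum_fiberwise_of_maps_to (t := range w) (g := deg) (by simp)]
  refine sum_le_sum fun i hi => ?_
  rw [mem_range] at hi
  rw [filter_filter, filter_congr fun x _ => and_iff_right_of_imp fun hx => hx ▸ hi]
  exact h i hi

section Threshold

variable {ι : Type*} (s : Finset ι) (a : ι → ℝ)

theorem card_filter_le_abs_mul_le_sum_abs (τ : ℝ) :
    (#(s.filter (τ ≤ |a ·|)) : ℝ) * τ ≤ ∑ i ∈ s, |a i| := calc
  (#(s.filter (τ ≤ |a ·|)) : ℝ) * τ ≤ ∑ i ∈ s.filter (τ ≤ |a ·|), |a i| := by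
    simpa using card_nsmul_le_sum _ (fun i => |a i|) τ fun i hi => (mem_filter.1 hi).2
  _ ≤ ∑ i ∈ s, |a i| :=
    sum_le_sum_of_subset_of_nonneg (filter_subset _ _) fun _ _ _ => abs_nonneg _

theorem sum_sq_filter_not_le_abs_le {τ : ℝ} (hτ : 0 ≤ τ) :
    ∑ i ∈ s.filter (¬ τ ≤ |a ·|), a i ^ 2 ≤ τ * ∑ i ∈ s, |a i| := calc
  ∑ i ∈ s.filter (¬ τ ≤ |a ·|), a i ^ 2 ≤ ∑ i ∈ s.filter (¬ τ ≤ |a ·|), τ * |a i| := by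
    refine sum_le_sum fun i hi => ?_
    rw [← sq_abs, sq]
    exact mul_le_mul_of_nonneg_right (not_le.1 (mem_filter.1 hi).2).le (abs_nonneg _)
  _ ≤ ∑ i ∈ s, τ * |a i| :=
    sum_le_sum_of_subset_of_nonneg (filter_subset _ _) fun _ _ _ => by positivity
  _ = τ * ∑ i ∈ s, |a i| := (mul_sum _ _ _).symm

end Threshold

/-- Fourier mass concentration: under total mass 1, level-wise L1 bounds
`∑_{|S|=i}|f̂(S)| ≤ M^i` for `i < w`, and tail bound `∑_{|S|≥w} f̂(S)² ≤ ε/2`, there is a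
family of at most `2·M^{2w}/ε` coefficients carrying Fourier mass at least `1 − ε`. -/
theorem stmt_8 {n : ℕ} (f : (Fin n → Bool) → ℝ) (w : ℕ) (M ε : ℝ)
    (hM : 2 ≤ M) (hε : 0 < ε)
    (hpar : ∑ S : Finset (Fin n), coef f S ^ 2 = 1)
    (hL1 : ∀ i < w,
      ∑ S ∈ Finset.univ.filter (fun S : Finset (Fin n) => S.card = i), |coef f S| ≤ M ^ i)
    (htail : ∑ S ∈ Finset.univ.filter (fun S : Finset (Fin n) => w ≤ S.card),
        coef f S ^ 2 ≤ ε / 2) :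
    ∃ F : Finset (Finset (Fin n)), (F.card : ℝ) ≤ 2 * M ^ (2 * w) / ε ∧
      1 - ε ≤ ∑ S ∈ F, coef f S ^ 2 := by
  have hMw : 0 < M ^ w := by positivity
  set τ := ε / (2 * M ^ w) with hτ
  set low := univ.filter (fun S : Finset (Fin n) => S.card < w)
  have hlow : ∑ S ∈ low, |coef f S| ≤ M ^ w :=
    (sum_filter_lt_le_sum_range _ _ _ hL1).trans (geom_sum_le_pow_of_two_le hM w)
  refine ⟨low.filter (τ ≤ |coef f ·|), ?_, ?_⟩
  · have hcard := (card_filter_le_abs_mul_le_sum_abs low (coef f) τ).trans hlow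
    rw [← le_div_iff₀ (by positivity)] at hcard
    refine hcard.trans_eq ?_
    rw [hτ, pow_mul', sq]
    field_simp
  · have hdropped : ∑ S ∈ low.filter (¬ τ ≤ |coef f ·|), coef f S ^ 2 ≤ ε / 2 := by
      refine (sum_sq_filter_not_le_abs_le low (coef f) (by positivity)).trans ?_
      calc τ * ∑ S ∈ low, |coef f S| ≤ τ * M ^ w := by gcongr
        _ = ε / 2 := by rw [hτ]; field_simp
    have hhigh := htail
    simp_rw [← not_lt] at hhigh
    rw [← sum_filter_add_sum_filter_not univ (fun S : Finset (Fin n) => S.card < w),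
      ← sum_filter_add_sum_filter_not low (τ ≤ |coef f ·|)] at hpar
    linarith
end

section
/- Let f: {±1}^n → {±1} and suppose f is computed by a decision tree T of depth d whose leaves are labeled by Boolean functions, such that for every leaf with induced restriction ρ we have W^{≥ℓ}[f|_ρ] ≤ ε (Fourier tail above level ℓ is at most ε). Then W^{≥ℓ+d}[f] ≤ ε. -/
/-- Decision trees whose leaves are labeled by real-valued Boolean functions. -/
inductive FTree (n : ℕ) : Type
  | leaf (g : (Fin n → Bool) → ℝ)
  | node (i : Fin n) (t0 t1 : FTree n)

namespace FTree

noncomputable def eval {n : ℕ} : FTree n → (Fin n → Bool) → ℝ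
  | leaf g, x => g x
  | node i t0 t1, x => if x i then t1.eval x else t0.eval x

def depth {n : ℕ} : FTree n → ℕ
  | leaf _ => 0
  | node _ t0 t1 => max t0.depth t1.depth + 1

/-- The leaves of the tree, each paired with the restriction (list of literals)
induced by its root-to-leaf path. -/
noncomputable def leaves {n : ℕ} :
    FTree n → List (List (Fin n × Bool) × ((Fin n → Bool) → ℝ))
  | leaf g => [([], g)]
  | node i t0 t1 =>
      (t0.leaves.map fun p => ((i, false) :: p.1, p.2))
        ++ (t1.leaves.map fun p => ((i, true) :: p.1, p.2))

end FTree

/-- `f` restricted by the partial assignment `ρ` (given as a list of literals). -/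
noncomputable def restrict {n : ℕ} (f : (Fin n → Bool) → ℝ) (ρ : List (Fin n × Bool)) :
    (Fin n → Bool) → ℝ :=
  fun x => f fun j => (ρ.lookup j).getD (x j)

/-- Fourier weight of `f` at levels `≥ ℓ`. -/
noncomputable def W {n : ℕ} (ℓ : ℕ) (f : (Fin n → Bool) → ℝ) : ℝ :=
  ∑ S ∈ Finset.univ.filter (fun S : Finset (Fin n) => ℓ ≤ S.card), coef f S ^ 2

/- The restrictions of `f` fixing `xᵢ` to `false` and to `true`, call them `f₀` and `f₁`, determine the
spectrum of `f`: for `i ∉ S`, `f̂(S) = (f̂₀(S) + f̂₁(S))/2` and `f̂(S ∪ {i}) = (f̂₀(S) - f̂₁(S))/2`.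
By the parallelogram law the two squares add up to `(f̂₀(S)² + f̂₁(S)²)/2`, so querying one variable
costs at most one Fourier level: `W^{≥k+1}[f] ≤ (W^{≥k}[f₀] + W^{≥k}[f₁])/2`. Induction on the tree,
whose root-to-leaf paths compose these single-variable restrictions, gives the theorem. -/

section Fourier

variable {n : ℕ}

noncomputable def chi (S : Finset (Fin n)) (x : Fin n → Bool) : ℝ :=
  ∏ i ∈ S, (if x i then (-1 : ℝ) else 1)

lemma coef_eq_sum_chi (f : (Fin n → Bool) → ℝ) (S : Finset (Fin n)) :
    coef f S = (∑ x, f x * chi S x) / 2 ^ n := rfl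

lemma chi_update_of_notMem {S : Finset (Fin n)} {i : Fin n} (hi : i ∉ S) (x : Fin n → Bool)
    (b : Bool) : chi S (Function.update x i b) = chi S x :=
  Finset.prod_congr rfl fun j hj => by rw [Function.update_of_ne (ne_of_mem_of_not_mem hj hi)]

lemma chi_insert_update {S : Finset (Fin n)} {i : Fin n} (hi : i ∉ S) (x : Fin n → Bool)
    (b : Bool) : chi (insert i S) (Function.update x i b) = (if b then -1 else 1) * chi S x := by
  rw [chi, Finset.prod_insert hi, Function.update_self, ← chi, chi_update_of_notMem hi]

lemma sum_eq_half_sum_update (g : (Fin n → Bool) → ℝ) (i : Fin n) :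
    ∑ x, g x = (∑ x, g (Function.update x i false) + ∑ x, g (Function.update x i true)) / 2 := by
  let flip : Equiv.Perm (Fin n → Bool) :=
    (Function.Involutive.toPerm (fun x => Function.update x i (!x i))) fun x => by simp
  have hpair : ∀ x, g (Function.update x i false) + g (Function.update x i true)
      = g x + g (flip x) := by
    intro x
    rw [show flip x = Function.update x i (!x i) from rfl]
    have hself : Function.update x i (x i) = x := Function.update_eq_self i x
    cases hx : x i <;> rw [hx] at hself <;>
      simp only [Bool.not_false, Bool.not_true, hself, add_comm]
  rw [← Finset.sum_add_distrib, Finset.sum_congr rfl fun x _ => hpair x, Finset.sum_add_distrib,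
    Equiv.sum_comp flip g]
  ring

end Fourier

section Restrict

variable {n : ℕ}

lemma restrict_singleton (f : (Fin n → Bool) → ℝ) (i : Fin n) (b : Bool) (x : Fin n → Bool) :
    restrict f [(i, b)] x = f (Function.update x i b) := by
  unfold restrict
  congr 1
  funext j
  by_cases h : j = i
  · subst h; simp [List.lookup]
  · simp [List.lookup, beq_false_of_ne h, Function.update_of_ne h]

lemma restrict_cons (f : (Fin n → Bool) → ℝ) (i : Fin n) (b : Bool) (ρ : List (Fin n × Bool)) :
    restrict f ((i, b) :: ρ) = restrict (restrict f [(i, b)]) ρ := by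
  funext x
  unfold restrict
  congr 1
  funext j
  by_cases h : j = i
  · subst h; simp [List.lookup]
  · simp [List.lookup, beq_false_of_ne h]

lemma coef_eq_half_sum_restrict (f : (Fin n → Bool) → ℝ) (i : Fin n) (S : Finset (Fin n)) :
    coef f S = (∑ x, (restrict f [(i, false)] x * chi S (Function.update x i false)
      + restrict f [(i, true)] x * chi S (Function.update x i true))) / 2 / 2 ^ n := by
  simp only [coef_eq_sum_chi, restrict_singleton, Finset.sum_add_distrib]
  rw [sum_eq_half_sum_update _ i]

lemma coef_eq_of_notMem (f : (Fin n → Bool) → ℝ) {i : Fin n} {S : Finset (Fin n)} (hi : i ∉ S) :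
    coef f S = (coef (restrict f [(i, false)]) S + coef (restrict f [(i, true)]) S) / 2 := by
  simp only [coef_eq_half_sum_restrict f i, chi_update_of_notMem hi, coef_eq_sum_chi,
    Finset.sum_add_distrib]
  ring

lemma coef_insert_eq_of_notMem (f : (Fin n → Bool) → ℝ) {i : Fin n} {S : Finset (Fin n)}
    (hi : i ∉ S) : coef f (insert i S)
      = (coef (restrict f [(i, false)]) S - coef (restrict f [(i, true)]) S) / 2 := by
  simp only [coef_eq_half_sum_restrict f i, chi_insert_update hi, coef_eq_sum_chi,
    Bool.false_eq_true, if_true, if_false, one_mul, neg_one_mul, mul_neg, Finset.sum_add_distrib,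
    Finset.sum_neg_distrib]
  ring

end Restrict

section Weight

variable {n : ℕ}

lemma W_antitone (f : (Fin n → Bool) → ℝ) : Antitone fun k => W k f :=
  fun _ _ hkm => Finset.sum_le_sum_of_subset_of_nonneg
    (Finset.monotone_filter_right _ fun _ _ hS => hkm.trans hS) fun _ _ _ => sq_nonneg _

/-- Every set of size `≥ k + 1` is `T` or `insert i T` for a unique `T ∌ i` of size `≥ k`. -/
lemma W_succ_le_sum_insert (f : (Fin n → Bool) → ℝ) (i : Fin n) (k : ℕ) :
    W (k + 1) f ≤ ∑ T ∈ Finset.univ.filter (fun T : Finset (Fin n) => k ≤ T.card ∧ i ∉ T),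
      (coef f T ^ 2 + coef f (insert i T) ^ 2) := by
  set C := Finset.univ.filter (fun T : Finset (Fin n) => k ≤ T.card ∧ i ∉ T)
  have hinj : Set.InjOn (insert i) (C : Set (Finset (Fin n))) := fun T hT U hU h => by
    simp only [C, Finset.coe_filter, Finset.mem_univ, true_and, Set.mem_ofPred_eq] at hT hU
    rw [← Finset.erase_insert hT.2, h, Finset.erase_insert hU.2]
  have hdisj : Disjoint C (C.image (insert i)) := by
    simp only [Finset.disjoint_left, Finset.mem_image, C, Finset.mem_filter]
    rintro _ ⟨-, -, hi⟩ ⟨T, -, rfl⟩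
    exact hi (Finset.mem_insert_self i T)
  have hcover : Finset.univ.filter (fun S : Finset (Fin n) => k + 1 ≤ S.card)
      ⊆ C ∪ C.image (insert i) := by
    intro S hS
    simp only [C, Finset.mem_union, Finset.mem_image, Finset.mem_filter, Finset.mem_univ,
      true_and] at hS ⊢
    by_cases hi : i ∈ S
    · exact Or.inr ⟨S.erase i, ⟨by rw [Finset.card_erase_of_mem hi]; omega,
        Finset.notMem_erase i S⟩, Finset.insert_erase hi⟩
    · exact Or.inl ⟨by omega, hi⟩
  calc W (k + 1) f ≤ ∑ S ∈ C ∪ C.image (insert i), coef f S ^ 2 :=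
        Finset.sum_le_sum_of_subset_of_nonneg hcover fun _ _ _ => sq_nonneg _
    _ = _ := by rw [Finset.sum_union hdisj, Finset.sum_image hinj, Finset.sum_add_distrib]

lemma W_succ_le (f : (Fin n → Bool) → ℝ) (i : Fin n) (k : ℕ) :
    W (k + 1) f ≤ (W k (restrict f [(i, false)]) + W k (restrict f [(i, true)])) / 2 := by
  set C := Finset.univ.filter (fun T : Finset (Fin n) => k ≤ T.card ∧ i ∉ T)
  have hC : C ⊆ Finset.univ.filter (fun T : Finset (Fin n) => k ≤ T.card) :=
    Finset.monotone_filter_right _ fun _ _ hT => hT.1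
  have hparallelogram : ∀ T ∈ C, coef f T ^ 2 + coef f (insert i T) ^ 2
      = (coef (restrict f [(i, false)]) T ^ 2 + coef (restrict f [(i, true)]) T ^ 2) / 2 := by
    intro T hT
    have hi : i ∉ T := (Finset.mem_filter.mp hT).2.2
    rw [coef_eq_of_notMem f hi, coef_insert_eq_of_notMem f hi]
    ring
  have hsub : ∀ g : (Fin n → Bool) → ℝ, ∑ T ∈ C, coef g T ^ 2 ≤ W k g := fun g =>
    Finset.sum_le_sum_of_subset_of_nonneg hC fun _ _ _ => sq_nonneg _
  calc W (k + 1) f ≤ ∑ T ∈ C, (coef f T ^ 2 + coef f (insert i T) ^ 2) :=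
        W_succ_le_sum_insert f i k
    _ = (∑ T ∈ C, coef (restrict f [(i, false)]) T ^ 2
          + ∑ T ∈ C, coef (restrict f [(i, true)]) T ^ 2) / 2 := by
        rw [Finset.sum_congr rfl hparallelogram, ← Finset.sum_div, Finset.sum_add_distrib]
    _ ≤ _ := by gcongr <;> exact hsub _

end Weight

theorem stmt_11_general {n d ℓ : ℕ} (ε : ℝ) (f : (Fin n → Bool) → ℝ)
    (T : FTree n) (hdepth : T.depth ≤ d)
    (hleaves : ∀ p ∈ T.leaves, W ℓ (restrict f p.1) ≤ ε) :
    W (ℓ + d) f ≤ ε := by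
  induction T generalizing d f with
  | leaf g =>
    have hroot := hleaves ([], g) (by simp [FTree.leaves])
    exact (W_antitone f (Nat.le_add_right ℓ d)).trans hroot
  | node i t0 t1 ih0 ih1 =>
    obtain ⟨d, rfl⟩ : ∃ d', d = d' + 1 := Nat.exists_eq_add_one.mpr (by
      simp only [FTree.depth] at hdepth; omega)
    simp only [FTree.depth, Nat.add_le_add_iff_right, max_le_iff] at hdepth
    have h0 : W (ℓ + d) (restrict f [(i, false)]) ≤ ε := ih0 _ hdepth.1 fun p hp => by
      rw [← restrict_cons]
      exact hleaves ((i, false) :: p.1, p.2) (List.mem_append_left _ (List.mem_map_of_mem hp))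
    have h1 : W (ℓ + d) (restrict f [(i, true)]) ≤ ε := ih1 _ hdepth.2 fun p hp => by
      rw [← restrict_cons]
      exact hleaves ((i, true) :: p.1, p.2) (List.mem_append_right _ (List.mem_map_of_mem hp))
    have hstep := W_succ_le f i (ℓ + d)
    rw [← add_assoc]
    linarith

/-- Tal's decision-tree composition lemma for Fourier tails: if `f` is
computed by a depth-`d` tree with function leaves and every leaf restriction `ρ`
satisfies `W^{≥ℓ}[f|_ρ] ≤ ε`, then `W^{≥ℓ+d}[f] ≤ ε`. -/
theorem stmt_11 {n d ℓ : ℕ} (ε : ℝ) (f : (Fin n → Bool) → ℝ)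
    (hf : ∀ x, f x = 1 ∨ f x = -1)
    (T : FTree n) (hdepth : T.depth ≤ d)
    (heval : ∀ x, f x = T.eval x)
    (hleaves : ∀ p ∈ T.leaves, W ℓ (restrict f p.1) ≤ ε) :
    W (ℓ + d) f ≤ ε :=
  stmt_11_general ε f T hdepth hleaves
end
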